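/- arXiv:2011.06569 — 5 statements merged into one kernel-verified Lean document; each statement's English description precedes it below -/
import Mathlib

section
/- Let (E_i)_{i∈I} and (F_j)_{j∈J} be finite families of d_B×d_A complex matrices. Let ψ ∈ ℂ^m ⊗ ℂ^{d_A} be a unit vector (viewed as ψ : Fin m × Fin d_A → ℂ), let φ := |ψ⟩⟨ψ| be the associated rank-one density matrix, and let τ be the reduced state of ψ on the second factor, i.e. the d_A×d_A matrix with entries τ_{a,a'} = Σ_r ψ(r,a)·conj(ψ(r,a')). Define ρ := Σ_i (I_m ⊗ E_i)·φ·(I_m ⊗ E_i)† and σ := Σ_j (I_m ⊗ F_j)·φ·(I_m ⊗ F_j)†. Then Tr(ρ·σ) = Σ_{i∈I, j∈J} |Tr(E_i†·F_j·τ)|². -/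
open Matrix Kronecker ComplexOrder

/-!
Each Kraus term `(I ⊗ E) |ψ⟩⟨ψ| (I ⊗ E)†` is the rank-one operator `|(I ⊗ E)ψ⟩⟨(I ⊗ E)ψ|`,
and the trace of a product of two rank-one operators `|u⟩⟨u|·|v⟩⟨v|` is `|⟨u, v⟩|²`. Here
`⟨(I ⊗ E)ψ, (I ⊗ F)ψ⟩ = ⟨ψ, (I ⊗ E†F)ψ⟩`, and the expectation of `I ⊗ M` in `ψ` only sees the
reduced state: it equals `Tr(M τ)`, where `τ` is the partial trace of `|ψ⟩⟨ψ|` over the first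
factor.
-/

namespace Matrix

variable {l m n p R : Type*}

def partialTraceFst [AddCommMonoid R] [Fintype l] (X : Matrix (l × n) (l × n) R) :
    Matrix n n R :=
  of fun a a' => ∑ r, X (r, a) (r, a')

theorem trace_one_kronecker_mul [Fintype n] [CommSemiring R] [Fintype l] [DecidableEq l]
    (M : Matrix n n R) (X : Matrix (l × n) (l × n) R) :
    trace ((1 : Matrix l l R) ⊗ₖ M * X) = trace (M * partialTraceFst X) := by
  simp only [trace, diag_apply, mul_apply, kroneckerMap_apply, one_apply, ite_mul, one_mul,
    zero_mul, Fintype.sum_prod_type, Finset.sum_ite_irrel, Finset.sum_const_zero,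
    Finset.sum_ite_eq, Finset.mem_univ, ↓reduceIte, partialTraceFst, of_apply, Finset.mul_sum]
  rw [Finset.sum_comm]
  exact Finset.sum_congr rfl fun _ _ => Finset.sum_comm

section StarRing

variable [CommSemiring R] [StarRing R]

theorem conjTranspose_one_kronecker_mul_one_kronecker [Fintype l] [DecidableEq l] [Fintype p]
    (M N : Matrix p n R) :
    ((1 : Matrix l l R) ⊗ₖ M)ᴴ * ((1 : Matrix l l R) ⊗ₖ N) = (1 : Matrix l l R) ⊗ₖ (Mᴴ * N) := by
  rw [conjTranspose_kronecker, conjTranspose_one, ← mul_kronecker_mul, one_mul]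

theorem mul_vecMulVec_star_mul_conjTranspose [Fintype n] (A : Matrix m n R) (u : n → R) :
    A * vecMulVec u (star u) * Aᴴ = vecMulVec (A *ᵥ u) (star (A *ᵥ u)) := by
  rw [mul_vecMulVec, vecMulVec_mul, star_mulVec]

theorem star_mulVec_dotProduct_mulVec [Fintype n] [Fintype m] [Fintype p] (A : Matrix m n R)
    (B : Matrix m p R) (u : n → R) (v : p → R) :
    star (A *ᵥ u) ⬝ᵥ B *ᵥ v = star u ⬝ᵥ (Aᴴ * B) *ᵥ v := by
  rw [star_mulVec, ← dotProduct_mulVec, mulVec_mulVec]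

theorem star_dotProduct_mulVec_eq_trace_mul_vecMulVec [Fintype n] (N : Matrix n n R) (u : n → R) :
    star u ⬝ᵥ N *ᵥ u = trace (N * vecMulVec u (star u)) := by
  rw [mul_vecMulVec, trace_vecMulVec, dotProduct_comm]

end StarRing

theorem trace_vecMulVec_star_mul_vecMulVec_star [Fintype n] {𝕜 : Type*} [RCLike 𝕜] (u v : n → 𝕜) :
    trace (vecMulVec u (star u) * vecMulVec v (star v)) = ((‖star u ⬝ᵥ v‖ ^ 2 : ℝ) : 𝕜) := by
  rw [vecMulVec_mul_vecMulVec, trace_vecMulVec, dotProduct_smul, smul_eq_mul, dotProduct_star,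
    dotProduct_comm, RCLike.star_def, RCLike.mul_conj, RCLike.ofReal_pow]

end Matrix

theorem parallel_output_overlap_general
    (m dA dB : ℕ) {I J : Type*} [Fintype I] [Fintype J]
    (E : I → Matrix (Fin dB) (Fin dA) ℂ) (F : J → Matrix (Fin dB) (Fin dA) ℂ)
    (ψ : Fin m × Fin dA → ℂ)
    (φ : Matrix (Fin m × Fin dA) (Fin m × Fin dA) ℂ)
    (hφ : φ = Matrix.vecMulVec ψ (star ψ))
    (τ : Matrix (Fin dA) (Fin dA) ℂ)
    (hτ : ∀ a a', τ a a' = ∑ r, ψ (r, a) * (starRingEnd ℂ) (ψ (r, a')))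
    (ρ σ : Matrix (Fin m × Fin dB) (Fin m × Fin dB) ℂ)
    (hρ : ρ = ∑ i, ((1 : Matrix (Fin m) (Fin m) ℂ) ⊗ₖ E i) * φ *
      ((1 : Matrix (Fin m) (Fin m) ℂ) ⊗ₖ E i)ᴴ)
    (hσ : σ = ∑ j, ((1 : Matrix (Fin m) (Fin m) ℂ) ⊗ₖ F j) * φ *
      ((1 : Matrix (Fin m) (Fin m) ℂ) ⊗ₖ F j)ᴴ) :
    (ρ * σ).trace =
      ((∑ i, ∑ j, ‖((E i)ᴴ * F j * τ).trace‖ ^ 2 : ℝ) : ℂ) := by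
  have hτ_eq : τ = partialTraceFst φ := by
    ext a a'
    simp [hτ, hφ, partialTraceFst, vecMulVec_apply]
  have h_term : ∀ M N : Matrix (Fin dB) (Fin dA) ℂ,
      trace ((1 : Matrix (Fin m) (Fin m) ℂ) ⊗ₖ M * φ * ((1 : Matrix (Fin m) (Fin m) ℂ) ⊗ₖ M)ᴴ *
        ((1 : Matrix (Fin m) (Fin m) ℂ) ⊗ₖ N * φ * ((1 : Matrix (Fin m) (Fin m) ℂ) ⊗ₖ N)ᴴ)) =
      ((‖(Mᴴ * N * τ).trace‖ ^ 2 : ℝ) : ℂ) := by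
    intro M N
    rw [hφ, mul_vecMulVec_star_mul_conjTranspose, mul_vecMulVec_star_mul_conjTranspose,
      trace_vecMulVec_star_mul_vecMulVec_star, star_mulVec_dotProduct_mulVec,
      conjTranspose_one_kronecker_mul_one_kronecker, star_dotProduct_mulVec_eq_trace_mul_vecMulVec,
      trace_one_kronecker_mul, ← hφ, ← hτ_eq, RCLike.ofReal_eq_complex_ofReal]
  rw [hρ, hσ, Finset.sum_mul, trace_sum]
  simp only [Finset.mul_sum, trace_sum, h_term, Complex.ofReal_sum]

/-- For Kraus families `E`, `F`, a unit vector `ψ` with rank-one density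
`φ = |ψ⟩⟨ψ|` and reduced state `τ`, the overlap `Tr(ρ·σ)` of the two channel outputs
equals `Σ_{i,j} |Tr(E_i† F_j τ)|²`. -/
theorem parallel_output_overlap
    (m dA dB : ℕ) {I J : Type*} [Fintype I] [Fintype J]
    (E : I → Matrix (Fin dB) (Fin dA) ℂ) (F : J → Matrix (Fin dB) (Fin dA) ℂ)
    (ψ : Fin m × Fin dA → ℂ) (hψ : ∑ p, ‖ψ p‖ ^ 2 = 1)
    (φ : Matrix (Fin m × Fin dA) (Fin m × Fin dA) ℂ)
    (hφ : φ = Matrix.vecMulVec ψ (star ψ))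
    (τ : Matrix (Fin dA) (Fin dA) ℂ)
    (hτ : ∀ a a', τ a a' = ∑ r, ψ (r, a) * (starRingEnd ℂ) (ψ (r, a')))
    (ρ σ : Matrix (Fin m × Fin dB) (Fin m × Fin dB) ℂ)
    (hρ : ρ = ∑ i, ((1 : Matrix (Fin m) (Fin m) ℂ) ⊗ₖ E i) * φ *
      ((1 : Matrix (Fin m) (Fin m) ℂ) ⊗ₖ E i)ᴴ)
    (hσ : σ = ∑ j, ((1 : Matrix (Fin m) (Fin m) ℂ) ⊗ₖ F j) * φ *
      ((1 : Matrix (Fin m) (Fin m) ℂ) ⊗ₖ F j)ᴴ) :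
    (ρ * σ).trace =
      ((∑ i, ∑ j, ‖((E i)ᴴ * F j * τ).trace‖ ^ 2 : ℝ) : ℂ) :=
  parallel_output_overlap_general m dA dB E F ψ φ hφ τ hτ ρ σ hρ hσ
end

section
/- Let ρ and σ be d×d complex positive semidefinite matrices with Tr ρ = Tr σ = 1. Then Tr(√ρ · √σ) ≥ Tr(ρ·σ), where √ denotes the positive semidefinite square root of a positive semidefinite matrix. -/
open Matrix ComplexOrder

/-- The positive semidefinite square root, as defined in the older Mathlib
(`Matrix.PosSemidef.sqrt`, removed since). -/
noncomputable def Matrix.PosSemidef.sqrt {n 𝕜 : Type*} [Fintype n] [DecidableEq n] [RCLike 𝕜]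
    {A : Matrix n n 𝕜} (hA : A.PosSemidef) : Matrix n n 𝕜 :=
  hA.1.eigenvectorUnitary.1 * diagonal ((↑) ∘ (√·) ∘ hA.1.eigenvalues) *
    (star hA.1.eigenvectorUnitary : Matrix n n 𝕜)

/-! The eigenvalues `λᵢ` of a density matrix lie in `[0, 1]`, so `√λᵢ ≥ λᵢ`, i.e.
`√ρ - ρ` is positive semidefinite. Since `Tr(XY) ≥ 0` for positive semidefinite `X`, `Y`,
`Tr(ρσ) ≤ Tr(√ρ σ) = Tr(σ √ρ) ≤ Tr(√σ √ρ) = Tr(√ρ √σ)`. -/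

namespace Matrix

variable {m n 𝕜 : Type*} [Fintype m] [Fintype n] [DecidableEq n] [RCLike 𝕜]

lemma posSemidef_mul_diagonal_mul_conjTranspose (B : Matrix m n 𝕜) {f : n → ℝ}
    (hf : ∀ i, 0 ≤ f i) : (B * diagonal (RCLike.ofReal ∘ f : n → 𝕜) * Bᴴ).PosSemidef :=
  (PosSemidef.diagonal fun i ↦ RCLike.ofReal_nonneg.mpr (hf i)).mul_mul_conjTranspose_same B

namespace PosSemidef

variable {A B C : Matrix n n 𝕜}

lemma sqrt_mul_self (hA : A.PosSemidef) : hA.sqrt * hA.sqrt = A := by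
  conv_rhs => rw [hA.1.spectral_theorem, Unitary.conjStarAlgAut_apply]
  simp only [sqrt, mul_assoc]
  rw [← mul_assoc (star _ : Matrix n n 𝕜) _ (diagonal _ * _),
    Unitary.coe_star_mul_self, one_mul, ← mul_assoc (diagonal _), diagonal_mul_diagonal]
  congr 3
  ext i
  simp [← RCLike.ofReal_mul, Real.mul_self_sqrt (hA.eigenvalues_nonneg i)]

lemma posSemidef_sqrt (hA : A.PosSemidef) : hA.sqrt.PosSemidef := by
  rw [sqrt, star_eq_conjTranspose]
  exact posSemidef_mul_diagonal_mul_conjTranspose _ fun _ ↦ Real.sqrt_nonneg _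

lemma eigenvalues_le_re_trace (hA : A.PosSemidef) (i : n) :
    hA.1.eigenvalues i ≤ RCLike.re A.trace := by
  rw [hA.1.trace_eq_sum_eigenvalues, ← RCLike.ofReal_sum, RCLike.ofReal_re]
  exact Finset.single_le_sum (fun j _ ↦ hA.eigenvalues_nonneg j) (Finset.mem_univ i)

lemma posSemidef_sqrt_sub_self (hA : A.PosSemidef) (h : ∀ i, hA.1.eigenvalues i ≤ 1) :
    (hA.sqrt - A).PosSemidef := by
  set U : Matrix n n 𝕜 := (hA.1.eigenvectorUnitary : Matrix n n 𝕜)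
  have hA' : A = U * diagonal (RCLike.ofReal ∘ hA.1.eigenvalues) * Uᴴ := hA.1.spectral_theorem
  have hdiff : hA.sqrt - A =
      U * diagonal (RCLike.ofReal ∘ fun i ↦ √(hA.1.eigenvalues i) - hA.1.eigenvalues i) * Uᴴ :=
    calc hA.sqrt - A
        = U * diagonal (RCLike.ofReal ∘ (√·) ∘ hA.1.eigenvalues) * Uᴴ -
            U * diagonal (RCLike.ofReal ∘ hA.1.eigenvalues) * Uᴴ := congrArg (hA.sqrt - ·) hA'
      _ = _ := by
        rw [← sub_mul, ← mul_sub, diagonal_sub]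
        congr 3
        ext i
        simp
  rw [hdiff]
  refine posSemidef_mul_diagonal_mul_conjTranspose U fun i ↦ ?_
  have h0 := hA.eigenvalues_nonneg i
  nlinarith [Real.sq_sqrt h0, Real.sqrt_nonneg (hA.1.eigenvalues i), h i]

lemma trace_mul_nonneg (hA : A.PosSemidef) (hB : B.PosSemidef) : 0 ≤ (A * B).trace := by
  have hconj : (hA.sqrt * B * hA.sqrt).PosSemidef := by
    simpa only [hA.posSemidef_sqrt.1.eq] using hB.conjTranspose_mul_mul_same hA.sqrt
  rw [← hA.sqrt_mul_self, ← trace_mul_cycle]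
  exact hconj.trace_nonneg

lemma trace_mul_le_trace_mul (hAB : (B - A).PosSemidef) (hC : C.PosSemidef) :
    (A * C).trace ≤ (B * C).trace := by
  simpa [sub_mul, trace_sub] using hAB.trace_mul_nonneg hC

end PosSemidef

end Matrix

/-- For density matrices `ρ`, `σ` one has `Tr(√ρ·√σ) ≥ Tr(ρ·σ)`. -/
theorem trace_sqrt_mul_sqrt_ge_trace_mul
    (d : ℕ) (ρ σ : Matrix (Fin d) (Fin d) ℂ)
    (hρ : ρ.PosSemidef) (hσ : σ.PosSemidef)
    (hρ1 : ρ.trace = 1) (hσ1 : σ.trace = 1) :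
    ((ρ * σ).trace).re ≤ ((hρ.sqrt * hσ.sqrt).trace).re := by
  have eigenvalues_le_one {A : Matrix (Fin d) (Fin d) ℂ} (hA : A.PosSemidef) (h1 : A.trace = 1)
      (i : Fin d) : hA.1.eigenvalues i ≤ 1 := by
    simpa [h1] using hA.eigenvalues_le_re_trace i
  have key : (ρ * σ).trace ≤ (hρ.sqrt * hσ.sqrt).trace :=
    calc (ρ * σ).trace
        ≤ (hρ.sqrt * σ).trace :=
          (hρ.posSemidef_sqrt_sub_self (eigenvalues_le_one hρ hρ1)).trace_mul_le_trace_mul hσ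
      _ = (σ * hρ.sqrt).trace := trace_mul_comm _ _
      _ ≤ (hσ.sqrt * hρ.sqrt).trace :=
          (hσ.posSemidef_sqrt_sub_self (eigenvalues_le_one hσ hσ1)).trace_mul_le_trace_mul
            hρ.posSemidef_sqrt
      _ = (hρ.sqrt * hσ.sqrt).trace := trace_mul_comm _ _
  exact (Complex.le_def.mp key).1
end

section
/- Let E₀₀ := !![1,0;0,0], E₁₁ := !![0,0;0,1], and M₋ := (1/2)·!![1,−1;−1,1] (the projector onto (|0⟩−|1⟩)/√2) be 2×2 complex matrices. Set s := sin²(π/8), β := 1/√(8s² + 5), and α := 2βs. Then 2α² + 5β² = 1, and the 4×4 matrix P := α·√(1/2)·(I₂ ⊗ E₀₀) + β·√(1/2)·((E₁₁ + M₋) ⊗ E₁₁) is Hermitian positive definite with smallest eigenvalue λ_min(P) = (2−√2)/(4·√(4−√2)). -/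
/-!
`P` is block diagonal with respect to the second tensor factor: on `· ⊗ |0⟩` it is `m • 1` with
`m = α/√2`, on `· ⊗ |1⟩` it is `(β/√2) (E₁₁ + M₋)`, whose eigenvalues are `(β/√2)(1 ± 1/√2)`.
Since `sin²(π/8) = (2 - √2)/4`, the smaller of these equals `m`, so `P - m • 1` is positive
semidefinite and singular, which forces `λ_min(P) = m`.
-/

open Matrix Kronecker ComplexOrder

noncomputable def lamMin {n : Type*} [Fintype n] [DecidableEq n]
    (A : Matrix n n ℂ) : ℝ :=
  if hA : A.IsHermitian then ⨅ i, hA.eigenvalues i else 0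

open scoped MatrixOrder Pointwise in
theorem lamMin_eq_of_posSemidef_sub_of_det_sub_eq_zero {n : Type*} [Fintype n] [DecidableEq n]
    {A : Matrix n n ℂ} {m : ℝ} (hpsd : (A - (m : ℂ) • 1).PosSemidef)
    (hdet : (A - (m : ℂ) • 1).det = 0) : lamMin A = m := by
  have hA : A.IsHermitian := by
    simpa using hpsd.isHermitian.add (isHermitian_one.smul (Complex.conj_ofReal m))
  have hspec : spectrum ℝ (A - (m : ℂ) • 1) = spectrum ℝ A - ({m} : Set ℝ) := by
    rw [spectrum.sub_singleton_eq, Algebra.algebraMap_eq_smul_one, Complex.coe_smul]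
  have hleast : IsLeast (Set.range hA.eigenvalues) m := by
    rw [← hA.spectrum_real_eq_range_eigenvalues]
    constructor
    · have hzero : (0 : ℝ) ∈ spectrum ℝ A - {m} := by
        rw [← hspec, spectrum.zero_mem_iff, isUnit_iff_isUnit_det, hdet]
        exact not_isUnit_zero
      simpa [Set.mem_sub, sub_eq_zero] using hzero
    · intro x hx
      have hshift : x - m ∈ spectrum ℝ (A - (m : ℂ) • 1) := hspec ▸ Set.sub_mem_sub hx rfl
      linarith [spectrum_nonneg_of_nonneg hpsd.nonneg hshift]
  obtain ⟨i, -⟩ := hleast.1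
  have : Nonempty n := ⟨i⟩
  rw [lamMin, dif_pos hA]
  exact hleast.isGLB.ciInf_eq

theorem smul_one_kronecker_add_smul_kronecker {R n : Type*} [CommRing R] [Fintype n]
    [DecidableEq n] {m c : R} {X N : Matrix n n R} (h : c • X = m • 1 + N) :
    m • ((1 : Matrix n n R) ⊗ₖ !![1, 0; 0, 0]) + c • (X ⊗ₖ !![0, 0; 0, 1]) =
      m • 1 + N ⊗ₖ !![0, 0; 0, 1] := by
  have hone : (1 : Matrix (n × Fin 2) (n × Fin 2) R) =
      1 ⊗ₖ !![1, 0; 0, 0] + 1 ⊗ₖ !![0, 0; 0, 1] := by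
    rw [← kronecker_add, ← one_kronecker_one, one_fin_two]
    simp
  rw [← smul_kronecker c X, h, add_kronecker, smul_kronecker, hone, smul_add, add_assoc]

/-- `(1 - √2, 1)` spans the eigenspace of `E₁₁ + M₋` for its larger eigenvalue `1 + 1/√2`;
the smaller one is `1 - 1/√2 = (2 - √2)/2`. -/
theorem smul_E11_add_Mminus_eq_smul_one_add_vecMulVec (κ : ℝ) :
    (κ : ℂ) • (!![0, 0; 0, 1] + (1 / 2 : ℂ) • !![1, -1; -1, 1]) =
      ((κ * (2 - √2) / 2 : ℝ) : ℂ) • 1 +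
      ((κ * (√2 + 1) / 2 : ℝ) : ℂ) •
        vecMulVec ![((1 - √2 : ℝ) : ℂ), 1] (star ![((1 - √2 : ℝ) : ℂ), 1]) := by
  have h2 : ((√2 : ℝ) : ℂ) ^ 2 = 2 := by exact_mod_cast Real.sq_sqrt zero_le_two
  ext i j
  simp only [Matrix.add_apply, Matrix.smul_apply, vecMulVec_apply]
  push_cast
  fin_cases i <;> fin_cases j <;> simp
  · linear_combination (κ : ℂ) * (1 - √2) / 2 * h2
  · linear_combination (κ : ℂ) / 2 * h2
  · linear_combination (κ : ℂ) / 2 * h2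
  · ring

theorem sin_pi_div_eight_sq : Real.sin (Real.pi / 8) ^ 2 = (2 - √2) / 4 := by
  rw [Real.sin_pi_div_eight, div_pow,
    Real.sq_sqrt (by linarith [Real.sqrt_two_lt_three_halves])]
  norm_num

/-- the explicit `4×4` matrix
`P = α·√(1/2)·(I₂ ⊗ E₀₀) + β·√(1/2)·((E₁₁ + M₋) ⊗ E₁₁)` arising in the analysis of
the Harrow et al. example is positive definite, the coefficients satisfy
`2α² + 5β² = 1`, and `λ_min(P) = (2−√2)/(4·√(4−√2))`. -/
theorem harrow_example_lamMin
    (E00 E11 Mm : Matrix (Fin 2) (Fin 2) ℂ)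
    (hE00 : E00 = !![1, 0; 0, 0])
    (hE11 : E11 = !![0, 0; 0, 1])
    (hMm : Mm = (1 / 2 : ℂ) • !![1, -1; -1, 1])
    (s β α : ℝ)
    (hs : s = Real.sin (Real.pi / 8) ^ 2)
    (hβ : β = 1 / Real.sqrt (8 * s ^ 2 + 5))
    (hα : α = 2 * β * s)
    (P : Matrix (Fin 2 × Fin 2) (Fin 2 × Fin 2) ℂ)
    (hP : P = ((α * Real.sqrt (1 / 2) : ℝ) : ℂ) • ((1 : Matrix (Fin 2) (Fin 2) ℂ) ⊗ₖ E00) +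
              ((β * Real.sqrt (1 / 2) : ℝ) : ℂ) • ((E11 + Mm) ⊗ₖ E11)) :
    2 * α ^ 2 + 5 * β ^ 2 = 1 ∧
    P.PosDef ∧
    lamMin P = (2 - Real.sqrt 2) / (4 * Real.sqrt (4 - Real.sqrt 2)) := by
  obtain rfl : s = (2 - √2) / 4 := hs.trans sin_pi_div_eight_sq
  have h2 : √2 ^ 2 = 2 := Real.sq_sqrt zero_le_two
  have h4 : 0 < 4 - √2 := by linarith [Real.sqrt_two_lt_three_halves]
  have hβ' : β = 1 / (√2 * √(4 - √2)) := by
    rw [hβ, ← Real.sqrt_mul zero_le_two]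
    congr 2
    linear_combination h2 / 2
  have hβsq : β ^ 2 * (2 * (4 - √2)) = 1 := by
    rw [hβ', div_pow, mul_pow, h2, Real.sq_sqrt h4.le]
    field_simp
  have hκ : β * √(1 / 2) = 1 / (2 * √(4 - √2)) := by
    rw [hβ', one_div 2, Real.sqrt_inv]
    field_simp
    exact h2.symm
  set κ := β * √(1 / 2)
  have hm : α * √(1 / 2) = κ * (2 - √2) / 2 := by rw [hα]; ring
  have hκpos : 0 < κ := by rw [hκ]; positivity
  have hmpos : 0 < κ * (2 - √2) / 2 := by
    nlinarith [Real.sqrt_two_lt_three_halves]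
  set N := (((κ * (√2 + 1) / 2 : ℝ) : ℂ) •
    vecMulVec ![((1 - √2 : ℝ) : ℂ), 1] (star ![((1 - √2 : ℝ) : ℂ), 1])) ⊗ₖ !![(0 : ℂ), 0; 0, 1]
  have hPN : P = ((κ * (2 - √2) / 2 : ℝ) : ℂ) • 1 + N := by
    rw [hP, hE00, hE11, hMm, hm]
    exact smul_one_kronecker_add_smul_kronecker (smul_E11_add_Mminus_eq_smul_one_add_vecMulVec κ)
  have hN : N.PosSemidef :=
    ((posSemidef_vecMulVec_self_star _).smul (by positivity)).kronecker
      (diagonal_vec2 (0 : ℂ) 1 ▸ posSemidef_diagonal_iff.2 fun i => by fin_cases i <;> simp)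
  have hNdet : N.det = 0 := by
    rw [det_kronecker, ← diagonal_vec2, det_diagonal]
    simp
  have hPsub : P - ((κ * (2 - √2) / 2 : ℝ) : ℂ) • 1 = N := by rw [hPN, add_sub_cancel_left]
  refine ⟨by rw [hα]; linear_combination hβsq + β ^ 2 / 2 * h2, ?_, ?_⟩
  · rw [hPN]
    exact (PosDef.one.smul (by exact_mod_cast hmpos)).add_posSemidef hN
  · rw [lamMin_eq_of_posSemidef_sub_of_det_sub_eq_zero (hPsub ▸ hN) (hPsub ▸ hNdet), hκ]
    field_simp
    norm_num
end

section
/- Let ρ and σ be density matrices on ℂ^d with spectral decompositions ρ = Σ_i λ_i·u_i u_i† and σ = Σ_j μ_j·v_j v_j†, where (u_i)_{i} and (v_j)_{j} are orthonormal bases of ℂ^d and λ_i, μ_j ≥ 0. Define Γ(i,j) := λ_i·|⟨v_j, u_i⟩|² and Γ̄(i,j) := μ_j·|⟨v_j, u_i⟩|². Then: (1) Γ ≥ 0, Γ̄ ≥ 0 and Σ_{i,j} Γ(i,j) = Σ_{i,j} Γ̄(i,j) = 1, i.e. Γ and Γ̄ are probability mass functions on (Fin d)×(Fin d); (2) for every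 α ∈ (0,1), Tr(ρ^α · σ^{1−α}) = Σ_{i,j} λ_i^α · μ_j^{1−α} · |⟨v_j, u_i⟩|² = Σ_{i,j} Γ(i,j)^α · Γ̄(i,j)^{1−α}; consequently, if σ is positive definite, the quantum Rényi relative entropy D_α(ρ‖σ) equals the classical Rényi relative entropy (1/(α−1))·log Σ_{i,j} Γ(i,j)^α Γ̄(i,j)^{1−α}. -/
/-!
Write `ρ = W diag(λ) Wᴴ` and `σ = X diag(μ) Xᴴ`, where the unitaries `W`, `X` have the
eigenvectors `u i`, `v j` as columns. If two unitary diagonalizations agree, their overlap matrix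
intertwines the two diagonals, so it only links equal eigenvalues and hence also intertwines
`f` applied to them: the functional calculus `matFun` does not depend on the chosen
eigenbasis, and `ρ^α = W diag(λ^α) Wᴴ`, `σ^{1-α} = X diag(μ^{1-α}) Xᴴ`. Rotating the trace gives
`Tr(ρ^α σ^{1-α}) = ∑ λ_i^α μ_j^{1-α} |(Xᴴ W)_{ji}|²`, and since the overlap `Xᴴ W` is unitary its
squared moduli form a doubly stochastic matrix, which normalizes `Γ` and `Γ̄`.
-/

open Matrix ComplexOrder

/-- Functional calculus for a matrix: apply `f` to the eigenvalues of a Hermitian matrix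
(junk value `0` on non-Hermitian input). -/
noncomputable def matFun {n : Type*} [Fintype n] [DecidableEq n] (f : ℝ → ℝ)
    (A : Matrix n n ℂ) : Matrix n n ℂ :=
  if hA : A.IsHermitian then
    (hA.eigenvectorUnitary : Matrix n n ℂ) *
      Matrix.diagonal (fun i => (f (hA.eigenvalues i) : ℂ)) *
      (hA.eigenvectorUnitary : Matrix n n ℂ)ᴴ
  else 0

/-- Real matrix power `A^t` via functional calculus (with `0^t = 0`). -/
noncomputable def mrpow {n : Type*} [Fintype n] [DecidableEq n]
    (A : Matrix n n ℂ) (t : ℝ) : Matrix n n ℂ :=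
  matFun (fun x => x ^ t) A

/-- A density matrix: positive semidefinite with unit trace. -/
def IsDensity {n : Type*} [Fintype n] (ρ : Matrix n n ℂ) : Prop :=
  ρ.PosSemidef ∧ ρ.trace = 1

/-- The quantum Rényi relative entropy `D_α(ρ‖σ) = (1/(α−1))·log Tr(ρ^α σ^{1−α})`. -/
noncomputable def renyiD {n : Type*} [Fintype n] [DecidableEq n]
    (α : ℝ) (ρ σ : Matrix n n ℂ) : ℝ :=
  (1 / (α - 1)) * Real.log ((mrpow ρ α * mrpow σ (1 - α)).trace.re)

theorem Unitary.conj_eq_conj_iff {R : Type*} [Monoid R] [StarMul R] {V W : R}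
    (hV : V ∈ unitary R) (hW : W ∈ unitary R) (x y : R) :
    V * x * star V = W * y * star W ↔ x * (star V * W) = star V * W * y := by
  constructor
  · intro h
    calc x * (star V * W) = star V * (V * x * star V) * W := by
          simp only [← mul_assoc, Unitary.star_mul_self_of_mem hV, one_mul]
      _ = star V * W * y := by
          rw [h]
          simp only [mul_assoc, Unitary.star_mul_self_of_mem hW, mul_one]
  · intro h
    calc V * x * star V = V * (x * (star V * W)) * star W := by
          simp only [mul_assoc, Unitary.mul_star_self_of_mem hW, mul_one]
      _ = W * y * star W := by
          rw [h]
          simp only [← mul_assoc, Unitary.mul_star_self_of_mem hV, one_mul]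

namespace Matrix

variable {R 𝕜 : Type*} [RCLike 𝕜] {m n : Type*} [Fintype m] [Fintype n] [DecidableEq m]
  [DecidableEq n]

theorem diagonal_comp_mul_eq_mul_diagonal_comp [CommRing R] [NoZeroDivisors R] (f : R → R)
    {a : m → R} {b : n → R} {M : Matrix m n R} (h : diagonal a * M = M * diagonal b) :
    diagonal (f ∘ a) * M = M * diagonal (f ∘ b) := by
  ext i j
  have hij : a i * M i j = M i j * b j := by simpa using congr_fun (congr_fun h i) j
  simp only [diagonal_mul, mul_diagonal, Function.comp_apply]
  rcases eq_or_ne (M i j) 0 with hM | hM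
  · simp [hM]
  · rw [mul_right_cancel₀ hM (hij.trans (mul_comm _ _)), mul_comm]

theorem conj_diagonal_comp_eq_of_conj_diagonal_eq [CommRing R] [StarRing R] [NoZeroDivisors R]
    {V W : Matrix n n R} (hV : V ∈ unitaryGroup n R) (hW : W ∈ unitaryGroup n R)
    {a b : n → R} (f : R → R) (h : V * diagonal a * star V = W * diagonal b * star W) :
    V * diagonal (f ∘ a) * star V = W * diagonal (f ∘ b) * star W :=
  (Unitary.conj_eq_conj_iff hV hW _ _).2 <|
    diagonal_comp_mul_eq_mul_diagonal_comp f ((Unitary.conj_eq_conj_iff hV hW _ _).1 h)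

theorem transpose_of_mem_unitaryGroup_of_orthonormal [CommRing R] [StarRing R]
    (u : n → n → R)
    (hu : ∀ i i', ∑ k, (starRingEnd R) (u i k) * u i' k = if i = i' then 1 else 0) :
    (of u)ᵀ ∈ unitaryGroup n R := by
  rw [mem_unitaryGroup_iff', star_eq_conjTranspose]
  ext i i'
  simpa [mul_apply, one_apply, starRingEnd_apply] using hu i i'

theorem sum_smul_vecMulVec_eq_conj_diagonal [CommSemiring R] [StarRing R]
    (u : n → n → R) (c : n → R) :
    ∑ i, c i • vecMulVec (u i) (star (u i)) = (of u)ᵀ * diagonal c * (of u)ᵀᴴ := by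
  ext k l
  simp [sum_apply, mul_apply, vecMulVec_apply, diagonal_apply, mul_assoc, mul_left_comm]

theorem trace_conj_of_mem_unitaryGroup [CommRing R] [StarRing R] {W : Matrix n n R}
    (hW : W ∈ unitaryGroup n R) (x : Matrix n n R) : (W * x * star W).trace = x.trace := by
  rw [trace_mul_comm, ← mul_assoc, mem_unitaryGroup_iff'.mp hW, one_mul]

theorem sum_eq_one_of_trace_conj_diagonal_eq_one {W : Matrix n n 𝕜}
    (hW : W ∈ unitaryGroup n 𝕜) {c : n → ℝ}
    (h : (W * diagonal (fun i => (c i : 𝕜)) * Wᴴ).trace = 1) :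
    ∑ i, c i = 1 := by
  rw [← star_eq_conjTranspose, trace_conj_of_mem_unitaryGroup hW, trace_diagonal] at h
  exact_mod_cast h

theorem sum_norm_sq_apply_left_of_mem_unitaryGroup {U : Matrix n n 𝕜}
    (hU : U ∈ unitaryGroup n 𝕜) (i : n) : ∑ j, ‖U j i‖ ^ 2 = 1 := by
  have h := congr_fun (congr_fun (mem_unitaryGroup_iff'.mp hU) i) i
  simp only [star_eq_conjTranspose, mul_apply, conjTranspose_apply, one_apply_eq,
    RCLike.star_def, RCLike.conj_mul] at h
  exact_mod_cast h

theorem sum_norm_sq_apply_right_of_mem_unitaryGroup {U : Matrix n n 𝕜}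
    (hU : U ∈ unitaryGroup n 𝕜) (j : n) : ∑ i, ‖U j i‖ ^ 2 = 1 := by
  have h := congr_fun (congr_fun (mem_unitaryGroup_iff.mp hU) j) j
  simp only [star_eq_conjTranspose, mul_apply, conjTranspose_apply, one_apply_eq,
    RCLike.star_def, RCLike.mul_conj] at h
  exact_mod_cast h

theorem trace_diagonal_mul_conjTranspose_mul_diagonal_mul (M : Matrix n n ℂ) (a b : n → ℝ) :
    (diagonal (fun i => (a i : ℂ)) * (Mᴴ * diagonal (fun j => (b j : ℂ)) * M)).trace =
      ((∑ i, ∑ j, a i * b j * ‖M j i‖ ^ 2 : ℝ) : ℂ) := by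
  simp only [trace, diag_apply, diagonal_mul]
  simp only [mul_apply, diagonal_apply, mul_ite, mul_zero, Finset.sum_ite_eq', Finset.mem_univ,
    if_true, conjTranspose_apply, RCLike.star_def, Finset.mul_sum]
  push_cast
  refine Finset.sum_congr rfl fun i _ => Finset.sum_congr rfl fun j _ => ?_
  rw [← Complex.conj_mul']
  ring

theorem trace_conj_diagonal_mul_conj_diagonal (W X : Matrix n n ℂ) (a b : n → ℝ) :
    (W * diagonal (fun i => (a i : ℂ)) * Wᴴ * (X * diagonal (fun j => (b j : ℂ)) * Xᴴ)).trace =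
      ((∑ i, ∑ j, a i * b j * ‖(Xᴴ * W) j i‖ ^ 2 : ℝ) : ℂ) := by
  rw [← trace_diagonal_mul_conjTranspose_mul_diagonal_mul, conjTranspose_mul,
    conjTranspose_conjTranspose]
  simp only [mul_assoc]
  rw [trace_mul_comm W]
  simp only [mul_assoc]

end Matrix

theorem matFun_conj_diagonal {n : Type*} [Fintype n] [DecidableEq n] (f : ℝ → ℝ)
    {W : Matrix n n ℂ} (hW : W ∈ unitaryGroup n ℂ) (c : n → ℝ) :
    matFun f (W * diagonal (fun i => (c i : ℂ)) * Wᴴ) =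
      W * diagonal (fun i => (f (c i) : ℂ)) * Wᴴ := by
  have hA : (W * diagonal (fun i => (c i : ℂ)) * Wᴴ).IsHermitian :=
    isHermitian_mul_mul_conjTranspose W (isHermitian_diagonal_of_self_adjoint _ (by ext i; simp))
  have hspec := hA.spectral_theorem
  rw [Unitary.conjStarAlgAut_apply] at hspec
  rw [matFun, dif_pos hA]
  -- `f` acts on the real diagonal entries through `z ↦ f z.re`
  simpa [Function.comp_def, star_eq_conjTranspose] using
    conj_diagonal_comp_eq_of_conj_diagonal_eq hA.eigenvectorUnitary.2 hW
      (fun z : ℂ => (f z.re : ℂ)) hspec.symm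

theorem Real.mul_rpow_mul_mul_rpow_one_sub {a b t : ℝ} (ha : 0 ≤ a) (hb : 0 ≤ b) (ht : 0 ≤ t)
    (α : ℝ) : (a * t) ^ α * (b * t) ^ (1 - α) = a ^ α * b ^ (1 - α) * t := by
  have htt : t ^ α * t ^ (1 - α) = t := by
    rw [← Real.rpow_add' ht (by norm_num), add_sub_cancel, Real.rpow_one]
  rw [Real.mul_rpow ha ht, Real.mul_rpow hb ht]
  linear_combination (a ^ α * b ^ (1 - α)) * htt

/-- from spectral decompositions `ρ = Σ λ_i u_i u_i†`, `σ = Σ μ_j v_j v_j†`,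
the classical distributions `Γ(i,j) = λ_i |⟨v_j,u_i⟩|²` and `Γ̄(i,j) = μ_j |⟨v_j,u_i⟩|²`
are probability mass functions, and `Tr(ρ^α σ^{1−α}) = Σ Γ^α Γ̄^{1−α}`, so the quantum
Rényi relative entropy equals its classical counterpart. -/
theorem nussbaum_szkola_distributions
    (d : ℕ) (ρ σ : Matrix (Fin d) (Fin d) ℂ)
    (hρ : IsDensity ρ) (hσ : IsDensity σ)
    (lam mu : Fin d → ℝ) (u v : Fin d → Fin d → ℂ)
    (hlam : ∀ i, 0 ≤ lam i) (hmu : ∀ j, 0 ≤ mu j)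
    (hu : ∀ i i', ∑ k, (starRingEnd ℂ) (u i k) * u i' k = if i = i' then 1 else 0)
    (hv : ∀ j j', ∑ k, (starRingEnd ℂ) (v j k) * v j' k = if j = j' then 1 else 0)
    (hρd : ρ = ∑ i, (lam i : ℂ) • Matrix.vecMulVec (u i) (star (u i)))
    (hσd : σ = ∑ j, (mu j : ℂ) • Matrix.vecMulVec (v j) (star (v j)))
    (Γ Γb : Fin d → Fin d → ℝ)
    (hΓ : ∀ i j, Γ i j = lam i * ‖∑ k, (starRingEnd ℂ) (v j k) * u i k‖ ^ 2)
    (hΓb : ∀ i j, Γb i j = mu j * ‖∑ k, (starRingEnd ℂ) (v j k) * u i k‖ ^ 2) :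
    (∀ i j, 0 ≤ Γ i j ∧ 0 ≤ Γb i j) ∧
    (∑ i, ∑ j, Γ i j = 1) ∧ (∑ i, ∑ j, Γb i j = 1) ∧
    (∀ α : ℝ, α ∈ Set.Ioo (0 : ℝ) 1 →
      ((mrpow ρ α * mrpow σ (1 - α)).trace).re =
        ∑ i, ∑ j, lam i ^ α * mu j ^ (1 - α) *
          ‖∑ k, (starRingEnd ℂ) (v j k) * u i k‖ ^ 2 ∧
      ((mrpow ρ α * mrpow σ (1 - α)).trace).re =
        ∑ i, ∑ j, Γ i j ^ α * Γb i j ^ (1 - α) ∧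
      (σ.PosDef →
        renyiD α ρ σ =
          (1 / (α - 1)) * Real.log (∑ i, ∑ j, Γ i j ^ α * Γb i j ^ (1 - α)))) := by
  set W := (of u)ᵀ
  set X := (of v)ᵀ
  have hW : W ∈ unitaryGroup (Fin d) ℂ := transpose_of_mem_unitaryGroup_of_orthonormal u hu
  have hX : X ∈ unitaryGroup (Fin d) ℂ := transpose_of_mem_unitaryGroup_of_orthonormal v hv
  have hρW : ρ = W * diagonal (fun i => (lam i : ℂ)) * Wᴴ :=
    hρd.trans (sum_smul_vecMulVec_eq_conj_diagonal u _)
  have hσX : σ = X * diagonal (fun j => (mu j : ℂ)) * Xᴴ :=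
    hσd.trans (sum_smul_vecMulVec_eq_conj_diagonal v _)
  have hoverlap : ∀ i j, ∑ k, (starRingEnd ℂ) (v j k) * u i k = (Xᴴ * W) j i := by
    intro i j
    simp only [W, X, mul_apply, conjTranspose_apply, transpose_apply, of_apply, starRingEnd_apply]
  have hM : Xᴴ * W ∈ unitaryGroup (Fin d) ℂ := mul_mem (Unitary.star_mem hX) hW
  have htrace : ∀ α : ℝ, ((mrpow ρ α * mrpow σ (1 - α)).trace).re =
      ∑ i, ∑ j, lam i ^ α * mu j ^ (1 - α) * ‖∑ k, (starRingEnd ℂ) (v j k) * u i k‖ ^ 2 := by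
    intro α
    rw [mrpow, mrpow, hρW, hσX, matFun_conj_diagonal _ hW, matFun_conj_diagonal _ hX,
      trace_conj_diagonal_mul_conj_diagonal, Complex.ofReal_re]
    simp only [hoverlap]
  have hclassical : ∀ α : ℝ, ∑ i, ∑ j, Γ i j ^ α * Γb i j ^ (1 - α) =
      ∑ i, ∑ j, lam i ^ α * mu j ^ (1 - α) * ‖∑ k, (starRingEnd ℂ) (v j k) * u i k‖ ^ 2 := by
    intro α
    simp only [hΓ, hΓb, Real.mul_rpow_mul_mul_rpow_one_sub (hlam _) (hmu _) (sq_nonneg _)]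
  refine ⟨fun i j => ⟨?_, ?_⟩, ?_, ?_, fun α _ => ⟨htrace α, (htrace α).trans (hclassical α).symm,
    fun _ => by rw [renyiD, htrace, hclassical]⟩⟩
  · exact hΓ i j ▸ mul_nonneg (hlam i) (sq_nonneg _)
  · exact hΓb i j ▸ mul_nonneg (hmu j) (sq_nonneg _)
  · simp only [hΓ, hoverlap, ← Finset.mul_sum, sum_norm_sq_apply_left_of_mem_unitaryGroup hM,
      mul_one, sum_eq_one_of_trace_conj_diagonal_eq_one hW (hρW ▸ hρ.2)]
  · rw [Finset.sum_comm]
    simp only [hΓb, hoverlap, ← Finset.mul_sum, sum_norm_sq_apply_right_of_mem_unitaryGroup hM,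
      mul_one, sum_eq_one_of_trace_conj_diagonal_eq_one hX (hσX ▸ hσ.2)]
end

section
/- Let p_I, p_x, p_y, p_z ≥ 0 with p_I + p_x + p_y + p_z = 1, and let P_p be the qubit Pauli channel mapping a 2×2 complex matrix ρ to p_I·ρ + p_x·XρX + p_y·YρY + p_z·ZρZ, where X = !![0,1;1,0], Y = !![0,−i;i,0], Z = !![1,0;0,−1]. Set p_max := max{ |p_I+p_x−p_y−p_z|, |p_I−p_x+p_y−p_z|, |p_I−p_x−p_y+p_z| } and assume p_max < 1. Then for every α ∈ (0,1), the supremum of D_α(P_p(ρ)‖P_p(σ)) over all pairs (ρ,σ) of density matrices on ℂ² equals (1/(α−1))·log Q(1−p_max, α), where Q(q,α) := (1−q/2)^α·(q/2)^{1−α} + (1−q/2)^{1−α}·(q/2)^α. -/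
open Matrix ComplexOrder

/-- Matrix logarithm via functional calculus. -/
noncomputable def mlog {n : Type*} [Fintype n] [DecidableEq n]
    (A : Matrix n n ℂ) : Matrix n n ℂ :=
  matFun Real.log A

/-- The quantum relative entropy `D(ρ‖σ) = Tr[ρ(log ρ − log σ)]`. -/
noncomputable def qRelEnt {n : Type*} [Fintype n] [DecidableEq n]
    (ρ σ : Matrix n n ℂ) : ℝ :=
  ((ρ * (mlog ρ - mlog σ)).trace).re

/-! Every qubit state is `1/2 + v·σ` with `‖v‖ ≤ 1/2`, and the Pauli channel multiplies the
coordinates of `v` by `λ = (p_I+p_x-p_y-p_z, p_I-p_x+p_y-p_z, p_I-p_x-p_y+p_z)`, so output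
vectors have length at most `p_max/2`. For `A = s + v·σ` and any `f`, `f(A)` is again of this
form, with scalar part the mean of `f(s ± ‖v‖)` and vector part `slope f (s-‖v‖) (s+‖v‖) • v`.
Hence `Tr(ρ^α σ^(1-α))` equals its value for antiparallel Bloch vectors of the same lengths plus
a nonnegative multiple of `⟪v, w⟫ + ‖v‖‖w‖`, and that antiparallel value decreases in both
lengths. As `1/(α-1) < 0`, the supremum is attained by antiparallel inputs along an axis with
`|λ_i| = p_max`. -/

open scoped RealInnerProductSpace

theorem matFun_eq_smul_add_smul_one {n : Type*} [Fintype n] [DecidableEq n] {f : ℝ → ℝ}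
    {A : Matrix n n ℂ} (hA : A.IsHermitian) (c d : ℝ)
    (hf : ∀ i, f (hA.eigenvalues i) = c * hA.eigenvalues i + d) :
    matFun f A = (c : ℂ) • A + (d : ℂ) • 1 := by
  set U : Matrix n n ℂ := (hA.eigenvectorUnitary : Matrix n n ℂ)
  have hdiag : diagonal (fun i => (f (hA.eigenvalues i) : ℂ)) =
      (c : ℂ) • diagonal (RCLike.ofReal ∘ hA.eigenvalues) + (d : ℂ) • 1 := by
    ext i j
    rcases eq_or_ne i j with rfl | hij
    · simp [hf]
    · simp [hij]
  have hUU : U * Uᴴ = 1 := Matrix.mem_unitaryGroup_iff.mp hA.eigenvectorUnitary.2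
  have hA' : A = U * diagonal (RCLike.ofReal ∘ hA.eigenvalues) * Uᴴ := hA.spectral_theorem
  rw [matFun, dif_pos hA, hdiag, Matrix.mul_add, Matrix.add_mul, Matrix.mul_smul,
    Matrix.smul_mul, Matrix.mul_smul, Matrix.smul_mul, Matrix.mul_one, hUU, ← hA']

theorem Matrix.IsHermitian.eigenvalues_eq_or_eq_of_trace_det {A : Matrix (Fin 2) (Fin 2) ℂ}
    (hA : A.IsHermitian) {a b : ℝ} (htr : A.trace = a + b) (hdet : A.det = a * b) (i : Fin 2) :
    hA.eigenvalues i = a ∨ hA.eigenvalues i = b := by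
  have hsum : hA.eigenvalues 0 + hA.eigenvalues 1 = a + b := by
    have := htr.symm.trans hA.trace_eq_sum_eigenvalues
    rw [Fin.sum_univ_two] at this
    exact Complex.ofReal_injective (by push_cast; exact this.symm)
  have hprod : hA.eigenvalues 0 * hA.eigenvalues 1 = a * b := by
    have := hdet.symm.trans hA.det_eq_prod_eigenvalues
    rw [Fin.prod_univ_two] at this
    exact Complex.ofReal_injective (by push_cast; exact this.symm)
  have hroot : (hA.eigenvalues i - a) * (hA.eigenvalues i - b) = 0 := by
    match i with
    | 0 => linear_combination hA.eigenvalues 0 * hsum - hprod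
    | 1 => linear_combination hA.eigenvalues 1 * hsum - hprod
  rcases mul_eq_zero.mp hroot with h | h
  · exact Or.inl (sub_eq_zero.mp h)
  · exact Or.inr (sub_eq_zero.mp h)

/-- `s + v 0 • X + v 1 • Y + v 2 • Z` in terms of the Pauli matrices `X`, `Y`, `Z`. -/
noncomputable def pauliMat (s : ℝ) (v : EuclideanSpace ℝ (Fin 3)) : Matrix (Fin 2) (Fin 2) ℂ :=
  !![(s + v 2 : ℂ), v 0 - v 1 * Complex.I; v 0 + v 1 * Complex.I, s - v 2]

theorem EuclideanSpace.norm_sq_fin_three (v : EuclideanSpace ℝ (Fin 3)) :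
    ‖v‖ ^ 2 = v 0 ^ 2 + v 1 ^ 2 + v 2 ^ 2 := by
  simp [EuclideanSpace.norm_sq_eq, Fin.sum_univ_three]

theorem EuclideanSpace.inner_fin_three (v w : EuclideanSpace ℝ (Fin 3)) :
    ⟪v, w⟫ = v 0 * w 0 + v 1 * w 1 + v 2 * w 2 := by
  simp [PiLp.inner_apply, Fin.sum_univ_three, mul_comm]

theorem pauliMat_isHermitian (s : ℝ) (v : EuclideanSpace ℝ (Fin 3)) :
    (pauliMat s v).IsHermitian := by
  ext i j
  fin_cases i <;> fin_cases j <;> simp [pauliMat, Complex.ext_iff]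

theorem trace_pauliMat (s : ℝ) (v : EuclideanSpace ℝ (Fin 3)) :
    (pauliMat s v).trace = (2 * s : ℝ) := by
  simp [pauliMat, trace_fin_two]; ring

theorem det_pauliMat (s : ℝ) (v : EuclideanSpace ℝ (Fin 3)) :
    (pauliMat s v).det = (s ^ 2 - ‖v‖ ^ 2 : ℝ) := by
  rw [EuclideanSpace.norm_sq_fin_three, det_fin_two]
  simp [pauliMat, Complex.ext_iff, sq]
  constructor <;> ring

theorem trace_pauliMat_mul_pauliMat (s t : ℝ) (v w : EuclideanSpace ℝ (Fin 3)) :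
    (pauliMat s v * pauliMat t w).trace = (2 * (s * t + ⟪v, w⟫) : ℝ) := by
  rw [EuclideanSpace.inner_fin_three, trace_fin_two]
  simp [pauliMat, mul_apply, Fin.sum_univ_two, Complex.ext_iff]
  constructor <;> ring

theorem smul_pauliMat_add_smul_one (c d s : ℝ) (v : EuclideanSpace ℝ (Fin 3)) :
    (c : ℂ) • pauliMat s v + (d : ℂ) • 1 = pauliMat (c * s + d) (c • v) := by
  ext i j
  fin_cases i <;> fin_cases j <;> simp [pauliMat, Complex.ext_iff] <;> ring

theorem eigenvalues_pauliMat_eq_or_eq (s : ℝ) (v : EuclideanSpace ℝ (Fin 3)) (i : Fin 2) :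
    (pauliMat_isHermitian s v).eigenvalues i = s + ‖v‖ ∨
      (pauliMat_isHermitian s v).eigenvalues i = s - ‖v‖ := by
  refine Matrix.IsHermitian.eigenvalues_eq_or_eq_of_trace_det _ ?_ ?_ i
  · rw [trace_pauliMat]; push_cast; ring
  · rw [det_pauliMat]; push_cast; ring

theorem matFun_pauliMat (f : ℝ → ℝ) (s : ℝ) (v : EuclideanSpace ℝ (Fin 3)) :
    matFun f (pauliMat s v) = pauliMat ((f (s + ‖v‖) + f (s - ‖v‖)) / 2)
      (slope f (s - ‖v‖) (s + ‖v‖) • v) := by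
  set c := slope f (s - ‖v‖) (s + ‖v‖)
  have hc : 2 * ‖v‖ * c = f (s + ‖v‖) - f (s - ‖v‖) := by
    simpa [c, two_mul, add_sub_sub_cancel] using sub_smul_slope f (s - ‖v‖) (s + ‖v‖)
  rw [matFun_eq_smul_add_smul_one (pauliMat_isHermitian s v) c (f (s + ‖v‖) - c * (s + ‖v‖)),
    smul_pauliMat_add_smul_one]
  · congr 1
    linear_combination -hc / 2
  · intro i
    rcases eigenvalues_pauliMat_eq_or_eq s v i with h | h <;> rw [h]
    · ring
    · linear_combination hc

/-- The last term is nonnegative by Cauchy–Schwarz and vanishes for `w = -v`. -/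
theorem re_trace_matFun_pauliMat_mul_matFun_pauliMat (f g : ℝ → ℝ) (s t : ℝ)
    (v w : EuclideanSpace ℝ (Fin 3)) :
    (matFun f (pauliMat s v) * matFun g (pauliMat t w)).trace.re =
      f (s + ‖v‖) * g (t - ‖w‖) + f (s - ‖v‖) * g (t + ‖w‖) +
        2 * slope f (s - ‖v‖) (s + ‖v‖) * slope g (t - ‖w‖) (t + ‖w‖) * (⟪v, w⟫ + ‖v‖ * ‖w‖) := by
  have hf := sub_smul_slope f (s - ‖v‖) (s + ‖v‖)
  have hg := sub_smul_slope g (t - ‖w‖) (t + ‖w‖)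
  simp only [smul_eq_mul, vsub_eq_sub, add_sub_sub_cancel] at hf hg
  rw [matFun_pauliMat, matFun_pauliMat, trace_pauliMat_mul_pauliMat, Complex.ofReal_re,
    real_inner_smul_left, real_inner_smul_right]
  linear_combination (-(1 / 2) * (g (t + ‖w‖) - g (t - ‖w‖))) * hf
    - (1 / 2) * ((‖v‖ + ‖v‖) * slope f (s - ‖v‖) (s + ‖v‖)) * hg

theorem le_re_trace_matFun_pauliMat_mul_matFun_pauliMat {f g : ℝ → ℝ} {s t : ℝ}
    {v w : EuclideanSpace ℝ (Fin 3)} (hf : 0 ≤ slope f (s - ‖v‖) (s + ‖v‖))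
    (hg : 0 ≤ slope g (t - ‖w‖) (t + ‖w‖)) :
    f (s + ‖v‖) * g (t - ‖w‖) + f (s - ‖v‖) * g (t + ‖w‖) ≤
      (matFun f (pauliMat s v) * matFun g (pauliMat t w)).trace.re := by
  rw [re_trace_matFun_pauliMat_mul_matFun_pauliMat]
  have hvw : 0 ≤ ⟪v, w⟫ + ‖v‖ * ‖w‖ := by
    linarith [neg_le_of_abs_le (abs_real_inner_le_norm v w)]
  exact le_add_of_nonneg_right (mul_nonneg (mul_nonneg (mul_nonneg zero_le_two hf) hg) hvw)

theorem re_trace_matFun_pauliMat_mul_matFun_pauliMat_neg (f g : ℝ → ℝ) (s t : ℝ)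
    (v : EuclideanSpace ℝ (Fin 3)) :
    (matFun f (pauliMat s v) * matFun g (pauliMat t (-v))).trace.re =
      f (s + ‖v‖) * g (t - ‖v‖) + f (s - ‖v‖) * g (t + ‖v‖) := by
  rw [re_trace_matFun_pauliMat_mul_matFun_pauliMat, norm_neg, inner_neg_right,
    real_inner_self_eq_norm_mul_norm, neg_add_cancel, mul_zero, add_zero]

theorem isDensity_pauliMat {v : EuclideanSpace ℝ (Fin 3)} (hv : ‖v‖ ≤ 1 / 2) :
    IsDensity (pauliMat (1 / 2) v) := by
  refine ⟨(pauliMat_isHermitian _ v).posSemidef_iff_eigenvalues_nonneg.mpr fun i => ?_, ?_⟩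
  · rcases eigenvalues_pauliMat_eq_or_eq (1 / 2) v i with h | h <;> simp only [Pi.zero_apply, h] <;>
      linarith [norm_nonneg v]
  · rw [trace_pauliMat]; norm_num

theorem IsDensity.exists_eq_pauliMat {ρ : Matrix (Fin 2) (Fin 2) ℂ} (hρ : IsDensity ρ) :
    ∃ v : EuclideanSpace ℝ (Fin 3), ‖v‖ ≤ 1 / 2 ∧ ρ = pauliMat (1 / 2) v := by
  obtain ⟨hpsd, htr⟩ := hρ
  have h00 : (ρ 0 0).im = 0 := Complex.conj_eq_iff_im.mp (hpsd.isHermitian.apply 0 0)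
  have h10 : ρ 1 0 = star (ρ 0 1) := (hpsd.isHermitian.apply 1 0).symm
  have h11 : ρ 1 1 = 1 - ρ 0 0 := by
    rw [trace_fin_two] at htr
    linear_combination htr
  set v : EuclideanSpace ℝ (Fin 3) := !₂[(ρ 0 1).re, -(ρ 0 1).im, (ρ 0 0).re - 1 / 2]
  have hρv : ρ = pauliMat (1 / 2) v := by
    ext i j
    fin_cases i <;> fin_cases j <;> simp [pauliMat, v, Complex.ext_iff, h00, h10, h11]
    ring
  refine ⟨v, ?_, hρv⟩
  have hdet := hpsd.det_nonneg
  rw [hρv, det_pauliMat, Complex.zero_le_real] at hdet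
  nlinarith [norm_nonneg v]

noncomputable def scaleCoords {ι : Type*} (l : ι → ℝ) (v : EuclideanSpace ℝ ι) :
    EuclideanSpace ℝ ι :=
  WithLp.toLp 2 fun i => l i * v i

theorem scaleCoords_neg {ι : Type*} (l : ι → ℝ) (v : EuclideanSpace ℝ ι) :
    scaleCoords l (-v) = -scaleCoords l v := by
  ext i
  simp [scaleCoords]

theorem norm_scaleCoords_le {ι : Type*} [Fintype ι] {l : ι → ℝ} {p : ℝ} (hp : 0 ≤ p)
    (hl : ∀ i, |l i| ≤ p) (v : EuclideanSpace ℝ ι) : ‖scaleCoords l v‖ ≤ p * ‖v‖ := by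
  refine le_of_sq_le_sq ?_ (by positivity)
  rw [mul_pow, EuclideanSpace.norm_sq_eq, EuclideanSpace.norm_sq_eq, Finset.mul_sum]
  refine Finset.sum_le_sum fun i _ => ?_
  simp only [scaleCoords, PiLp.toLp_apply, Real.norm_eq_abs, sq_abs, mul_pow]
  exact mul_le_mul_of_nonneg_right (sq_le_sq' (neg_le_of_abs_le (hl i)) (le_of_abs_le (hl i)))
    (sq_nonneg _)

theorem norm_scaleCoords_single {ι : Type*} [Fintype ι] [DecidableEq ι] (l : ι → ℝ) (k : ι)
    (a : ℝ) : ‖scaleCoords l (EuclideanSpace.single k a)‖ = |l k| * |a| := by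
  have : scaleCoords l (EuclideanSpace.single k a) = EuclideanSpace.single k (l k * a) := by
    ext i
    by_cases hik : i = k <;> simp [scaleCoords, hik]
  rw [this, PiLp.norm_single, Real.norm_eq_abs, abs_mul]

theorem pauliChannel_pauliMat {pI px py pz : ℝ} (hsum : pI + px + py + pz = 1) (s : ℝ)
    (v : EuclideanSpace ℝ (Fin 3)) :
    (pI : ℂ) • pauliMat s v + (px : ℂ) • (!![0, 1; 1, 0] * pauliMat s v * !![0, 1; 1, 0]) +
      (py : ℂ) • (!![0, -Complex.I; Complex.I, 0] * pauliMat s v *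
        !![0, -Complex.I; Complex.I, 0]) +
      (pz : ℂ) • (!![1, 0; 0, -1] * pauliMat s v * !![1, 0; 0, -1]) =
      pauliMat s (scaleCoords ![pI + px - py - pz, pI - px + py - pz, pI - px - py + pz] v) := by
  obtain rfl : pI = 1 - px - py - pz := by linear_combination hsum
  ext i j
  fin_cases i <;> fin_cases j <;> simp [pauliMat, scaleCoords, Complex.ext_iff] <;>
    (try constructor) <;> ring

/-- `Tr(ρ^α σ^(1-α))` for the commuting states `ρ = diag(1/2 + m₁, 1/2 - m₁)` and
`σ = diag(1/2 - m₂, 1/2 + m₂)`. -/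
noncomputable def renyiQ (α m₁ m₂ : ℝ) : ℝ :=
  (1 / 2 + m₁) ^ α * (1 / 2 - m₂) ^ (1 - α) + (1 / 2 - m₁) ^ α * (1 / 2 + m₂) ^ (1 - α)

theorem renyiQ_comm (α m₁ m₂ : ℝ) : renyiQ α m₁ m₂ = renyiQ (1 - α) m₂ m₁ := by
  rw [renyiQ, renyiQ, sub_sub_cancel]
  ring

theorem renyiQ_half_half (α p : ℝ) :
    renyiQ α (p / 2) (p / 2) = (1 - (1 - p) / 2) ^ α * ((1 - p) / 2) ^ (1 - α) +
      (1 - (1 - p) / 2) ^ (1 - α) * ((1 - p) / 2) ^ α := by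
  rw [renyiQ, show 1 - (1 - p) / 2 = 1 / 2 + p / 2 by ring,
    show (1 - p) / 2 = 1 / 2 - p / 2 by ring]
  ring

theorem renyiQ_pos {α m₁ m₂ : ℝ} (hm₁ : m₁ ∈ Set.Ico 0 (1 / 2)) (hm₂ : m₂ ∈ Set.Ico 0 (1 / 2)) :
    0 < renyiQ α m₁ m₂ := by
  have h₁ : 0 < 1 / 2 - m₁ := by linarith [hm₁.2]
  have h₂ : 0 < 1 / 2 - m₂ := by linarith [hm₂.2]
  have h₁' : 0 < 1 / 2 + m₁ := by linarith [hm₁.1]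
  have h₂' : 0 < 1 / 2 + m₂ := by linarith [hm₂.1]
  unfold renyiQ
  positivity

theorem rpow_sub_one_mul_rpow_one_sub {x y : ℝ} (hx : 0 < x) (hy : 0 ≤ y) (α : ℝ) :
    x ^ (α - 1) * y ^ (1 - α) = (y / x) ^ (1 - α) := by
  rw [Real.div_rpow hy hx.le, ← neg_sub, Real.rpow_neg hx.le, inv_mul_eq_div]

theorem antitoneOn_renyiQ {α m₂ : ℝ} (hα : α ∈ Set.Ioo 0 1) (hm₂ : m₂ ∈ Set.Icc 0 (1 / 2)) :
    AntitoneOn (fun m => renyiQ α m m₂) (Set.Icc 0 (1 / 2)) := by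
  obtain ⟨hα₀, hα₁⟩ := hα
  have hderiv : ∀ m ∈ Set.Ioo (0 : ℝ) (1 / 2), HasDerivAt (fun m => renyiQ α m m₂)
      (α * ((1 / 2 + m) ^ (α - 1) * (1 / 2 - m₂) ^ (1 - α)
        - (1 / 2 - m) ^ (α - 1) * (1 / 2 + m₂) ^ (1 - α))) m := by
    intro m hm
    have hadd := ((hasDerivAt_id' m).const_add (1 / 2 : ℝ)).rpow_const (p := α)
      (Or.inl (by linarith [hm.1] : (0 : ℝ) < 1 / 2 + m).ne')
    have hsub := ((hasDerivAt_id' m).const_sub (1 / 2 : ℝ)).rpow_const (p := α)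
      (Or.inl (by linarith [hm.2] : (0 : ℝ) < 1 / 2 - m).ne')
    exact ((hadd.mul_const _).add (hsub.mul_const _)).congr_deriv (by ring)
  refine antitoneOn_of_hasDerivWithinAt_nonpos (convex_Icc _ _) ?_
    (fun m hm => (hderiv m (by simpa using hm)).hasDerivWithinAt) fun m hm => ?_
  · unfold renyiQ
    fun_prop (disch := positivity)
  · rw [interior_Icc] at hm
    obtain ⟨hm₀, hm₁⟩ := hm
    have hle : (1 / 2 + m) ^ (α - 1) * (1 / 2 - m₂) ^ (1 - α) ≤ 1 := by
      rw [rpow_sub_one_mul_rpow_one_sub (by linarith) (by linarith [hm₂.2])]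
      exact Real.rpow_le_one (div_nonneg (by linarith [hm₂.2]) (by linarith))
        ((div_le_one (by linarith)).mpr (by linarith [hm₂.1])) (by linarith)
    have hge : 1 ≤ (1 / 2 - m) ^ (α - 1) * (1 / 2 + m₂) ^ (1 - α) := by
      rw [rpow_sub_one_mul_rpow_one_sub (by linarith) (by linarith [hm₂.1])]
      exact Real.one_le_rpow ((one_le_div (by linarith)).mpr (by linarith [hm₂.1])) (by linarith)
    exact mul_nonpos_of_nonneg_of_nonpos hα₀.le (by linarith)

theorem renyiQ_le_renyiQ {α p m₁ m₂ : ℝ} (hα : α ∈ Set.Ioo 0 1) (hp : p ≤ 1 / 2)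
    (hm₁ : m₁ ∈ Set.Icc 0 p) (hm₂ : m₂ ∈ Set.Icc 0 p) : renyiQ α p p ≤ renyiQ α m₁ m₂ := by
  have hα' : 1 - α ∈ Set.Ioo 0 1 := ⟨by linarith [hα.2], by linarith [hα.1]⟩
  have hpp : p ∈ Set.Icc 0 p := ⟨hm₁.1.trans hm₁.2, le_rfl⟩
  have mem {m : ℝ} (hm : m ∈ Set.Icc 0 p) : m ∈ Set.Icc (0 : ℝ) (1 / 2) := ⟨hm.1, hm.2.trans hp⟩
  calc renyiQ α p p ≤ renyiQ α m₁ p := antitoneOn_renyiQ hα (mem hpp) (mem hm₁) (mem hpp) hm₁.2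
    _ = renyiQ (1 - α) p m₁ := renyiQ_comm _ _ _
    _ ≤ renyiQ (1 - α) m₂ m₁ := antitoneOn_renyiQ hα' (mem hm₁) (mem hm₂) (mem hpp) hm₂.2
    _ = renyiQ α m₁ m₂ := by rw [renyiQ_comm, sub_sub_cancel]

theorem renyiQ_le_re_trace_mrpow_pauliMat_mul {α : ℝ} (hα : α ∈ Set.Icc 0 1)
    {v w : EuclideanSpace ℝ (Fin 3)} (hv : ‖v‖ ≤ 1 / 2) (hw : ‖w‖ ≤ 1 / 2) :
    renyiQ α ‖v‖ ‖w‖ ≤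
      (mrpow (pauliMat (1 / 2) v) α * mrpow (pauliMat (1 / 2) w) (1 - α)).trace.re :=
  le_re_trace_matFun_pauliMat_mul_matFun_pauliMat
    ((Real.monotoneOn_rpow_Ici_of_exponent_nonneg hα.1).slope_nonneg
      (Set.mem_Ici.mpr (by linarith)) (Set.mem_Ici.mpr (by linarith [norm_nonneg v])))
    ((Real.monotoneOn_rpow_Ici_of_exponent_nonneg (by linarith [hα.2])).slope_nonneg
      (Set.mem_Ici.mpr (by linarith)) (Set.mem_Ici.mpr (by linarith [norm_nonneg w])))

theorem renyiD_pauliMat_neg (α : ℝ) (v : EuclideanSpace ℝ (Fin 3)) :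
    renyiD α (pauliMat (1 / 2) v) (pauliMat (1 / 2) (-v)) =
      1 / (α - 1) * Real.log (renyiQ α ‖v‖ ‖v‖) := by
  rw [renyiD]
  congr 2
  exact re_trace_matFun_pauliMat_mul_matFun_pauliMat_neg _ _ _ _ v

theorem renyiD_pauliMat_le {α p : ℝ} (hα : α ∈ Set.Ioo 0 1) (hp : p < 1 / 2)
    {v w : EuclideanSpace ℝ (Fin 3)} (hv : ‖v‖ ≤ p) (hw : ‖w‖ ≤ p) :
    renyiD α (pauliMat (1 / 2) v) (pauliMat (1 / 2) w) ≤
      1 / (α - 1) * Real.log (renyiQ α p p) := by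
  have hp₀ : 0 ≤ p := (norm_nonneg v).trans hv
  refine mul_le_mul_of_nonpos_left (Real.log_le_log (renyiQ_pos ⟨hp₀, hp⟩ ⟨hp₀, hp⟩) ?_)
    (div_nonpos_of_nonneg_of_nonpos zero_le_one (by linarith [hα.2]))
  calc renyiQ α p p ≤ renyiQ α ‖v‖ ‖w‖ :=
        renyiQ_le_renyiQ hα hp.le ⟨norm_nonneg v, hv⟩ ⟨norm_nonneg w, hw⟩
    _ ≤ _ := renyiQ_le_re_trace_mrpow_pauliMat_mul (Set.Ioo_subset_Icc_self hα)
        (by linarith) (by linarith)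

theorem abs_le_max_abs_fin_three (l : Fin 3 → ℝ) (i : Fin 3) :
    |l i| ≤ max (max |l 0| |l 1|) |l 2| := by
  fin_cases i <;> simp

theorem exists_abs_eq_max_abs_fin_three (l : Fin 3 → ℝ) :
    ∃ k, |l k| = max (max |l 0| |l 1|) |l 2| := by
  rcases max_choice (max |l 0| |l 1|) |l 2| with h | h <;> rw [h]
  · rcases max_choice |l 0| |l 1| with h' | h' <;> rw [h'] <;> exact ⟨_, rfl⟩
  · exact ⟨_, rfl⟩

theorem pauli_renyi_sup_general
    (pI px py pz : ℝ)
    (hsum : pI + px + py + pz = 1)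
    (X Y Z : Matrix (Fin 2) (Fin 2) ℂ)
    (hX : X = !![0, 1; 1, 0])
    (hY : Y = !![0, -Complex.I; Complex.I, 0])
    (hZ : Z = !![1, 0; 0, -1])
    (Pp : Matrix (Fin 2) (Fin 2) ℂ → Matrix (Fin 2) (Fin 2) ℂ)
    (hPp : ∀ ρ, Pp ρ = ((pI : ℝ) : ℂ) • ρ + ((px : ℝ) : ℂ) • (X * ρ * X) +
      ((py : ℝ) : ℂ) • (Y * ρ * Y) + ((pz : ℝ) : ℂ) • (Z * ρ * Z))
    (pmax : ℝ)
    (hpmax : pmax = max (max |pI + px - py - pz| |pI - px + py - pz|)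
      |pI - px - py + pz|)
    (hpmax1 : pmax < 1)
    (Q : ℝ → ℝ → ℝ)
    (hQ : ∀ q' α, Q q' α = (1 - q' / 2) ^ α * (q' / 2) ^ (1 - α) +
      (1 - q' / 2) ^ (1 - α) * (q' / 2) ^ α)
    (α : ℝ) (hα : α ∈ Set.Ioo (0 : ℝ) 1) :
    sSup {y : ℝ | ∃ ρ σ : Matrix (Fin 2) (Fin 2) ℂ,
        IsDensity ρ ∧ IsDensity σ ∧ y = renyiD α (Pp ρ) (Pp σ)} =
      (1 / (α - 1)) * Real.log (Q (1 - pmax) α) := by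
  subst hX hY hZ
  set l : Fin 3 → ℝ := ![pI + px - py - pz, pI - px + py - pz, pI - px - py + pz]
  replace hpmax : pmax = max (max |l 0| |l 1|) |l 2| := hpmax
  have hPp' (v : EuclideanSpace ℝ (Fin 3)) :
      Pp (pauliMat (1 / 2) v) = pauliMat (1 / 2) (scaleCoords l v) := by
    rw [hPp, pauliChannel_pauliMat hsum]
  have hl (i : Fin 3) : |l i| ≤ pmax := hpmax ▸ abs_le_max_abs_fin_three l i
  obtain ⟨k, hk⟩ : ∃ k, |l k| = pmax := hpmax ▸ exists_abs_eq_max_abs_fin_three l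
  have hpmax₀ : 0 ≤ pmax := (abs_nonneg _).trans (hl 0)
  rw [hQ, ← renyiQ_half_half]
  refine IsGreatest.csSup_eq ⟨?_, ?_⟩
  · set v := EuclideanSpace.single k (1 / 2 : ℝ)
    have hv : ‖v‖ = 1 / 2 := by simp [v]
    refine ⟨pauliMat (1 / 2) v, pauliMat (1 / 2) (-v), isDensity_pauliMat hv.le,
      isDensity_pauliMat (by rw [norm_neg, hv]), ?_⟩
    rw [hPp', hPp', scaleCoords_neg, renyiD_pauliMat_neg, norm_scaleCoords_single, hk,
      abs_of_pos one_half_pos, mul_one_div]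
  · rintro _ ⟨ρ, σ, hρ, hσ, rfl⟩
    obtain ⟨v, hv, rfl⟩ := hρ.exists_eq_pauliMat
    obtain ⟨w, hw, rfl⟩ := hσ.exists_eq_pauliMat
    rw [hPp', hPp']
    refine renyiD_pauliMat_le hα (by linarith) ?_ ?_
    · linarith [norm_scaleCoords_le hpmax₀ hl v, mul_le_mul_of_nonneg_left hv hpmax₀]
    · linarith [norm_scaleCoords_le hpmax₀ hl w, mul_le_mul_of_nonneg_left hw hpmax₀]

/-- for the qubit Pauli channel with probabilities `(p_I,p_x,p_y,p_z)` and
`p_max < 1`, for every `α ∈ (0,1)`,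
`sup_{ρ,σ} D_α(P_p(ρ)‖P_p(σ)) = (1/(α−1))·log Q(1−p_max, α)`. -/
theorem pauli_renyi_sup
    (pI px py pz : ℝ)
    (hpI : 0 ≤ pI) (hpx : 0 ≤ px) (hpy : 0 ≤ py) (hpz : 0 ≤ pz)
    (hsum : pI + px + py + pz = 1)
    (X Y Z : Matrix (Fin 2) (Fin 2) ℂ)
    (hX : X = !![0, 1; 1, 0])
    (hY : Y = !![0, -Complex.I; Complex.I, 0])
    (hZ : Z = !![1, 0; 0, -1])
    (Pp : Matrix (Fin 2) (Fin 2) ℂ → Matrix (Fin 2) (Fin 2) ℂ)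
    (hPp : ∀ ρ, Pp ρ = ((pI : ℝ) : ℂ) • ρ + ((px : ℝ) : ℂ) • (X * ρ * X) +
      ((py : ℝ) : ℂ) • (Y * ρ * Y) + ((pz : ℝ) : ℂ) • (Z * ρ * Z))
    (pmax : ℝ)
    (hpmax : pmax = max (max |pI + px - py - pz| |pI - px + py - pz|)
      |pI - px - py + pz|)
    (hpmax1 : pmax < 1)
    (Q : ℝ → ℝ → ℝ)
    (hQ : ∀ q' α, Q q' α = (1 - q' / 2) ^ α * (q' / 2) ^ (1 - α) +
      (1 - q' / 2) ^ (1 - α) * (q' / 2) ^ α)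
    (α : ℝ) (hα : α ∈ Set.Ioo (0 : ℝ) 1) :
    sSup {y : ℝ | ∃ ρ σ : Matrix (Fin 2) (Fin 2) ℂ,
        IsDensity ρ ∧ IsDensity σ ∧ y = renyiD α (Pp ρ) (Pp σ)} =
      (1 / (α - 1)) * Real.log (Q (1 - pmax) α) :=
  pauli_renyi_sup_general pI px py pz hsum X Y Z hX hY hZ Pp hPp pmax hpmax hpmax1 Q hQ α hα
end
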